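/- Let κ₀ be a real number. If κ(x,y) ≥ κ₀ for every pair of adjacent vertices x, y of G, then κ(x,y) ≥ κ₀ for every pair of distinct vertices x, y of G. -/

import Mathlib

/-!
Along a geodesic `x ~ z ⋯ y`, the triangle inequality for the Wasserstein distance gives
`d(x,z) κ_α(x,z) + d(z,y) κ_α(z,y) ≤ d(x,y) κ_α(x,y)`; dividing by `1 - α` and letting `α → 1`
gives the same inequality for `κ`, and induction on `d(x,y)` propagates the bound from edges.
The limit exists because `m_x^β` is the mixture `l • m_x^α + (1 - l) • δ_x` with
`l = (1 - β) / (1 - α)`, which makes `κ_α / (1 - α)` nondecreasing, while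
`W(m_x^α, m_y^α) ≥ d(x,y) - 2 (1 - α)` bounds it by `2`.
-/

open Finset Filter Topology

noncomputable section

/-- A coupling between two (probability) mass functions `μ` and `ν` on a finite
vertex set: a matrix with values in `[0,1]` whose row sums are `μ` and whose
column sums are `ν`. -/
def IsCoupling {V : Type*} [Fintype V] (A : V → V → ℝ) (μ ν : V → ℝ) : Prop :=
  (∀ x y, 0 ≤ A x y ∧ A x y ≤ 1) ∧
  (∀ x, ∑ y, A x y = μ x) ∧
  (∀ y, ∑ x, A x y = ν y)

/-- The (1-)Wasserstein distance between two mass functions on the vertex set of a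
graph, with respect to the graph distance. -/
def Wass {V : Type*} [Fintype V] (G : SimpleGraph V) (μ ν : V → ℝ) : ℝ :=
  sInf {c | ∃ A : V → V → ℝ, IsCoupling A μ ν ∧
    c = ∑ x, ∑ y, A x y * (G.dist x y : ℝ)}

/-- The probability measure `m_x^α`: mass `α` at `x`, mass `(1-α)/d_x` at each
neighbor of `x`, and `0` elsewhere. -/
def mMeas {V : Type*} [Fintype V] [DecidableEq V] (G : SimpleGraph V)
    [DecidableRel G.Adj] (α : ℝ) (x : V) : V → ℝ :=
  fun z => if z = x then α else if G.Adj x z then (1 - α) / (G.degree x : ℝ) else 0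

/-- The `α`-Ricci curvature `κ_α(x,y) = 1 - W(m_x^α, m_y^α)/d(x,y)`. -/
def kappaAlpha {V : Type*} [Fintype V] [DecidableEq V] (G : SimpleGraph V)
    [DecidableRel G.Adj] (α : ℝ) (x y : V) : ℝ :=
  1 - Wass G (mMeas G α x) (mMeas G α y) / (G.dist x y : ℝ)

/-- The Lin–Lu–Yau Ricci curvature `κ(x,y) = lim_{α→1⁻} κ_α(x,y)/(1-α)`. -/
def kappa {V : Type*} [Fintype V] [DecidableEq V] (G : SimpleGraph V)
    [DecidableRel G.Adj] (x y : V) : ℝ :=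
  limUnder (𝓝[<] (1 : ℝ)) (fun α => kappaAlpha G α x y / (1 - α))

/-- The (non-normalized) graph Laplacian `(Δf)(x) = d_x f(x) - ∑_{y ~ x} f(y)`. -/
def lap {V : Type*} [Fintype V] [DecidableEq V] (G : SimpleGraph V)
    [DecidableRel G.Adj] (f : V → ℝ) (x : V) : ℝ :=
  (G.degree x : ℝ) * f x - ∑ y ∈ G.neighborFinset x, f y

end

open SimpleGraph

section Transport

variable {V : Type*} [Fintype V]

structure IsProbMass (μ : V → ℝ) : Prop where
  nonneg : ∀ x, 0 ≤ μ x
  sum_eq_one : ∑ x, μ x = 1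

lemma IsProbMass.le_one {μ : V → ℝ} (hμ : IsProbMass μ) (x : V) : μ x ≤ 1 :=
  hμ.sum_eq_one ▸ single_le_sum (fun i _ => hμ.nonneg i) (mem_univ x)

lemma isProbMass_single [DecidableEq V] (x : V) : IsProbMass (Pi.single x (1 : ℝ)) :=
  ⟨fun u => by by_cases h : u = x <;> simp [h], by simp⟩

namespace IsCoupling

variable {A B : V → V → ℝ} {μ ν ρ μ' ν' : V → ℝ}

lemma nonneg (hA : IsCoupling A μ ν) (x y : V) : 0 ≤ A x y := (hA.1 x y).1

lemma sum_right (hA : IsCoupling A μ ν) (x : V) : ∑ y, A x y = μ x := hA.2.1 x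

lemma sum_left (hA : IsCoupling A μ ν) (y : V) : ∑ x, A x y = ν y := hA.2.2 y

lemma of_nonneg (hμ : IsProbMass μ) (h0 : ∀ x y, 0 ≤ A x y)
    (hrow : ∀ x, ∑ y, A x y = μ x) (hcol : ∀ y, ∑ x, A x y = ν y) : IsCoupling A μ ν :=
  ⟨fun x y => ⟨h0 x y, (single_le_sum (fun i _ => h0 x i) (mem_univ y)).trans
    ((hrow x).trans_le (hμ.le_one x))⟩, hrow, hcol⟩

lemma prod (hμ : IsProbMass μ) (hν : IsProbMass ν) : IsCoupling (fun x y => μ x * ν y) μ ν :=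
  of_nonneg hμ (fun x y => mul_nonneg (hμ.nonneg x) (hν.nonneg y))
    (fun x => by rw [← mul_sum, hν.sum_eq_one, mul_one])
    (fun y => by rw [← sum_mul, hμ.sum_eq_one, one_mul])

lemma eq_zero_of_right_eq_zero (hA : IsCoupling A μ ν) {y : V} (hy : ν y = 0) (x : V) :
    A x y = 0 :=
  (sum_eq_zero_iff_of_nonneg fun i _ => hA.nonneg i y).mp ((hA.sum_left y).trans hy) x
    (mem_univ x)

lemma eq_zero_of_left_eq_zero (hA : IsCoupling A μ ν) {x : V} (hx : μ x = 0) (y : V) :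
    A x y = 0 :=
  (sum_eq_zero_iff_of_nonneg fun i _ => hA.nonneg x i).mp ((hA.sum_right x).trans hx) y
    (mem_univ y)

lemma mix (hA : IsCoupling A μ ν) (hB : IsCoupling B μ' ν') {l : ℝ} (hl0 : 0 ≤ l) (hl1 : l ≤ 1) :
    IsCoupling (fun x y => l * A x y + (1 - l) * B x y)
      (fun x => l * μ x + (1 - l) * μ' x) (fun y => l * ν y + (1 - l) * ν' y) := by
  refine ⟨fun x y => ⟨?_, ?_⟩, fun x => ?_, fun y => ?_⟩
  · have := hA.nonneg x y; have := hB.nonneg x y; positivity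
  · nlinarith [hA.1 x y, hB.1 x y]
  · simp only [sum_add_distrib, ← mul_sum, hA.sum_right, hB.sum_right]
  · simp only [sum_add_distrib, ← mul_sum, hA.sum_left, hB.sum_left]

end IsCoupling

variable (G : SimpleGraph V)

noncomputable def transportCost (A : V → V → ℝ) : ℝ := ∑ x, ∑ y, A x y * (G.dist x y : ℝ)

variable {G} {A B : V → V → ℝ} {μ ν ρ μ' ν' : V → ℝ}

lemma transportCost_nonneg (hA : IsCoupling A μ ν) : 0 ≤ transportCost G A :=
  sum_nonneg fun x _ => sum_nonneg fun y _ => mul_nonneg (hA.nonneg x y) (Nat.cast_nonneg _)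

lemma wass_le_transportCost (hA : IsCoupling A μ ν) : Wass G μ ν ≤ transportCost G A :=
  csInf_le ⟨0, by rintro _ ⟨B, hB, rfl⟩; exact transportCost_nonneg hB⟩ ⟨A, hA, rfl⟩

lemma le_wass (hμ : IsProbMass μ) (hν : IsProbMass ν) {c : ℝ}
    (h : ∀ A, IsCoupling A μ ν → c ≤ transportCost G A) : c ≤ Wass G μ ν :=
  le_csInf ⟨_, _, IsCoupling.prod hμ hν, rfl⟩ (by rintro _ ⟨A, hA, rfl⟩; exact h A hA)

lemma exists_transportCost_lt (hμ : IsProbMass μ) (hν : IsProbMass ν) {ε : ℝ} (hε : 0 < ε) :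
    ∃ A, IsCoupling A μ ν ∧ transportCost G A < Wass G μ ν + ε := by
  have hne : {c | ∃ A, IsCoupling A μ ν ∧ c = transportCost G A}.Nonempty :=
    ⟨_, _, IsCoupling.prod hμ hν, rfl⟩
  obtain ⟨_, ⟨A, hA, rfl⟩, hlt⟩ := exists_lt_of_csInf_lt hne (lt_add_of_pos_right _ hε)
  exact ⟨A, hA, hlt⟩

lemma transportCost_mix (l : ℝ) :
    transportCost G (fun x y => l * A x y + (1 - l) * B x y)
      = l * transportCost G A + (1 - l) * transportCost G B := by
  simp only [transportCost, add_mul, mul_assoc, sum_add_distrib, ← mul_sum]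

lemma transportCost_prod_single [DecidableEq V] (x y : V) :
    transportCost G (fun u v => (Pi.single x 1 : V → ℝ) u * (Pi.single y 1 : V → ℝ) v)
      = G.dist x y := by
  simp [transportCost, Pi.single_apply]

lemma wass_mix_le (hμ : IsProbMass μ) (hν : IsProbMass ν) (hB : IsCoupling B μ' ν')
    {l : ℝ} (hl0 : 0 ≤ l) (hl1 : l ≤ 1) :
    Wass G (fun x => l * μ x + (1 - l) * μ' x) (fun y => l * ν y + (1 - l) * ν' y)
      ≤ l * Wass G μ ν + (1 - l) * transportCost G B := by
  refine le_of_forall_pos_le_add fun ε hε => ?_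
  obtain ⟨A, hA, hAε⟩ := exists_transportCost_lt (G := G) hμ hν hε
  calc _ ≤ l * transportCost G A + (1 - l) * transportCost G B :=
        transportCost_mix (G := G) l ▸ wass_le_transportCost (hA.mix hB hl0 hl1)
    _ ≤ l * (Wass G μ ν + ε) + (1 - l) * transportCost G B := by gcongr
    _ ≤ _ := by nlinarith

lemma sum_mul_sub_sum_mul_le_transportCost (hA : IsCoupling A μ ν) {f : V → ℝ}
    (hf : ∀ u v, f v - f u ≤ G.dist u v) :
    ∑ v, ν v * f v - ∑ u, μ u * f u ≤ transportCost G A := by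
  have hν : ∑ v, ν v * f v = ∑ u, ∑ v, A u v * f v := by
    simp_rw [← hA.sum_left, sum_mul]; exact sum_comm
  have hμ : ∑ u, μ u * f u = ∑ u, ∑ v, A u v * f u := by simp_rw [← hA.sum_right, sum_mul]
  calc ∑ v, ν v * f v - ∑ u, μ u * f u = ∑ u, ∑ v, A u v * (f v - f u) := by
        simp only [hν, hμ, mul_sub, sum_sub_distrib]
    _ ≤ transportCost G A :=
        sum_le_sum fun u _ => sum_le_sum fun v _ => mul_le_mul_of_nonneg_left (hf u v)
          (hA.nonneg u v)

-- Where `ν y = 0` the summand is `0 / 0 = 0`, harmlessly: `A x y = B y z = 0` there anyway.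
noncomputable def glue (A B : V → V → ℝ) (ν : V → ℝ) (x z : V) : ℝ := ∑ y, A x y * B y z / ν y

lemma sum_mul_div_eq_left (hA : IsCoupling A μ ν) (hB : IsCoupling B ν ρ) (x y : V) :
    ∑ z, A x y * B y z / ν y = A x y := by
  by_cases hy : ν y = 0
  · simp [hy, hA.eq_zero_of_right_eq_zero hy x]
  · rw [← sum_div, ← mul_sum, hB.sum_right, mul_div_cancel_right₀ _ hy]

lemma sum_mul_div_eq_right (hA : IsCoupling A μ ν) (hB : IsCoupling B ν ρ) (y z : V) :
    ∑ x, A x y * B y z / ν y = B y z := by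
  by_cases hy : ν y = 0
  · simp [hy, hB.eq_zero_of_left_eq_zero hy z]
  · rw [← sum_div, ← sum_mul, hA.sum_left, mul_div_cancel_left₀ _ hy]

lemma isCoupling_glue (hμ : IsProbMass μ) (hA : IsCoupling A μ ν) (hB : IsCoupling B ν ρ) :
    IsCoupling (glue A B ν) μ ρ := by
  have hν : ∀ y, 0 ≤ ν y := fun y => hA.sum_left y ▸ sum_nonneg fun x _ => hA.nonneg x y
  refine .of_nonneg hμ (fun x z => sum_nonneg fun y _ => ?_) (fun x => ?_) (fun z => ?_)
  · have := hA.nonneg x y; have := hB.nonneg y z; have := hν y; positivity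
  · simp only [glue]
    rw [sum_comm, sum_congr rfl fun y _ => sum_mul_div_eq_left hA hB x y, hA.sum_right]
  · simp only [glue]
    rw [sum_comm, sum_congr rfl fun y _ => sum_mul_div_eq_right hA hB y z, hB.sum_left]

lemma transportCost_glue_le (hconn : G.Connected) (hA : IsCoupling A μ ν)
    (hB : IsCoupling B ν ρ) :
    transportCost G (glue A B ν) ≤ transportCost G A + transportCost G B := by
  have hν : ∀ y, 0 ≤ ν y := fun y => hA.sum_left y ▸ sum_nonneg fun x _ => hA.nonneg x y
  calc transportCost G (glue A B ν)
      = ∑ x, ∑ z, ∑ y, A x y * B y z / ν y * (G.dist x z : ℝ) := by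
        simp only [transportCost, glue, sum_mul]
    _ ≤ ∑ x, ∑ z, ∑ y, A x y * B y z / ν y * ((G.dist x y : ℝ) + G.dist y z) := by
        gcongr with x _ z _ y _
        · have := hA.nonneg x y; have := hB.nonneg y z; have := hν y; positivity
        · exact_mod_cast hconn.dist_triangle
    _ = transportCost G A + transportCost G B := by
        simp only [mul_add, sum_add_distrib, transportCost]
        congr 1
        · refine sum_congr rfl fun x _ => ?_
          rw [sum_comm]
          simp only [← sum_mul, sum_mul_div_eq_left hA hB]
        · rw [sum_comm, sum_congr rfl fun z _ => sum_comm, sum_comm]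
          simp only [← sum_mul, sum_mul_div_eq_right hA hB]

lemma wass_triangle (hconn : G.Connected) (hμ : IsProbMass μ) (hν : IsProbMass ν)
    (hρ : IsProbMass ρ) : Wass G μ ρ ≤ Wass G μ ν + Wass G ν ρ := by
  refine le_of_forall_pos_le_add fun ε hε => ?_
  obtain ⟨A, hA, hAε⟩ := exists_transportCost_lt (G := G) hμ hν (half_pos hε)
  obtain ⟨B, hB, hBε⟩ := exists_transportCost_lt (G := G) hν hρ (half_pos hε)
  have := wass_le_transportCost (G := G) (isCoupling_glue hμ hA hB)
  have := transportCost_glue_le hconn hA hB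
  linarith

end Transport

section RandomWalk

variable {V : Type*} [Fintype V] [DecidableEq V] {G : SimpleGraph V} [DecidableRel G.Adj]

lemma sum_mMeas_mul (α : ℝ) (x : V) (f : V → ℝ) :
    ∑ z, mMeas G α x z * f z
      = α * f x + (1 - α) / G.degree x * ∑ z ∈ G.neighborFinset x, f z := by
  have hsplit : ∀ z, mMeas G α x z * f z
      = (if z = x then α * f x else 0) + if G.Adj x z then (1 - α) / G.degree x * f z else 0 := by
    intro z
    by_cases hz : z = x
    · subst hz; simp [mMeas]
    · by_cases ha : G.Adj x z <;> simp [mMeas, hz, ha]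
  simp [sum_congr rfl fun z _ => hsplit z, sum_add_distrib, mul_sum, neighborFinset_eq_filter,
    sum_filter]

lemma isProbMass_mMeas {α : ℝ} (h0 : 0 ≤ α) (h1 : α ≤ 1) {x : V} (hx : 0 < G.degree x) :
    IsProbMass (mMeas G α x) := by
  refine ⟨fun z => ?_, ?_⟩
  · unfold mMeas
    split_ifs
    exacts [h0, div_nonneg (sub_nonneg.mpr h1) (Nat.cast_nonneg _), le_rfl]
  · simpa [card_neighborFinset_eq_degree, hx.ne'] using sum_mMeas_mul (G := G) α x 1

lemma sum_mMeas_mul_dist (α : ℝ) {x : V} (hx : 0 < G.degree x) :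
    ∑ z, mMeas G α x z * G.dist x z = 1 - α := by
  have hnbr : ∑ z ∈ G.neighborFinset x, (G.dist x z : ℝ) = G.degree x := by
    rw [sum_congr rfl fun z hz => by
      rw [dist_eq_one_iff_adj.mpr ((mem_neighborFinset G x z).mp hz)]]
    simp
  rw [sum_mMeas_mul, hnbr, dist_self]
  field_simp
  simp

lemma mMeas_eq_mix {α : ℝ} (hα : α ≠ 1) (β : ℝ) (x : V) :
    mMeas G β x = fun u => (1 - β) / (1 - α) * mMeas G α x u
      + (1 - (1 - β) / (1 - α)) * (Pi.single x 1 : V → ℝ) u := by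
  have : 1 - α ≠ 0 := sub_ne_zero.mpr hα.symm
  ext u
  by_cases hu : u = x
  · subst hu
    simp only [mMeas, ↓reduceIte, Pi.single_eq_same, mul_one]
    field_simp
    ring
  · by_cases ha : G.Adj x u
    · simp only [mMeas, hu, ha, ↓reduceIte, Pi.single_eq_of_ne hu, mul_zero, add_zero]
      field_simp
    · simp [mMeas, hu, ha]

lemma dist_mul_kappaAlpha (hconn : G.Connected) (α : ℝ) {x y : V} (hxy : x ≠ y) :
    G.dist x y * kappaAlpha G α x y = G.dist x y - Wass G (mMeas G α x) (mMeas G α y) := by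
  have hd : (G.dist x y : ℝ) ≠ 0 := by exact_mod_cast (hconn.pos_dist_of_ne hxy).ne'
  rw [kappaAlpha, mul_sub, mul_one, mul_div_cancel₀ _ hd]

end RandomWalk

lemma SimpleGraph.Connected.exists_adj_dist_add_one_eq {V : Type*} {G : SimpleGraph V}
    (hconn : G.Connected) {x y : V} (hxy : x ≠ y) :
    ∃ z, G.Adj x z ∧ G.dist z y + 1 = G.dist x y := by
  obtain ⟨p, hp⟩ := hconn.exists_walk_length_eq_dist x y
  cases p with
  | nil => exact absurd rfl hxy
  | @cons _ z _ hxz q =>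
    have hq : G.dist z y ≤ q.length := dist_le q
    have htri : G.dist x y ≤ G.dist x z + G.dist z y := hconn.dist_triangle
    rw [dist_eq_one_iff_adj.mpr hxz] at htri
    exact ⟨z, hxz, by simp only [Walk.length_cons] at hp; omega⟩

lemma SimpleGraph.Connected.ne_of_dist_add_dist_eq {V : Type*} {G : SimpleGraph V}
    (hconn : G.Connected) {x y z : V} (hxz : x ≠ z) (hgeo : G.dist x z + G.dist z y = G.dist x y) :
    x ≠ y := by
  rintro rfl
  rw [dist_self] at hgeo
  exact hxz (hconn.dist_eq_zero_iff.mp (by omega))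

section Curvature

variable {V : Type*} [Fintype V] [DecidableEq V] [Nontrivial V] {G : SimpleGraph V}
  [DecidableRel G.Adj]

lemma SimpleGraph.Connected.isProbMass_mMeas (hconn : G.Connected) {α : ℝ} (h0 : 0 ≤ α)
    (h1 : α ≤ 1) (x : V) : IsProbMass (mMeas G α x) :=
  _root_.isProbMass_mMeas h0 h1 (hconn.preconnected.degree_pos_of_nontrivial x)

lemma dist_sub_le_wass_mMeas (hconn : G.Connected) {α : ℝ} (h0 : 0 ≤ α) (h1 : α ≤ 1)
    (x y : V) : G.dist x y - 2 * (1 - α) ≤ Wass G (mMeas G α x) (mMeas G α y) := by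
  have hx := hconn.preconnected.degree_pos_of_nontrivial x
  have hy := hconn.preconnected.degree_pos_of_nontrivial y
  have hPy := hconn.isProbMass_mMeas h0 h1 y
  have hlip : ∀ u v, (G.dist x v : ℝ) - G.dist x u ≤ G.dist u v := fun u v => by
    have : (G.dist x v : ℝ) ≤ G.dist x u + G.dist u v := by exact_mod_cast hconn.dist_triangle
    linarith
  have hfar : (G.dist x y : ℝ) - (1 - α) ≤ ∑ v, mMeas G α y v * G.dist x v := by
    calc (G.dist x y : ℝ) - (1 - α) = ∑ v, mMeas G α y v * (G.dist x y - G.dist y v) := by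
          simp only [mul_sub, sum_sub_distrib, ← sum_mul, hPy.sum_eq_one,
            sum_mMeas_mul_dist α hy, one_mul]
      _ ≤ ∑ v, mMeas G α y v * G.dist x v := by
          gcongr with v _
          · exact hPy.nonneg v
          · have hvy : G.dist v y = G.dist y v := dist_comm
            linarith [hvy ▸ hlip v y]
  refine le_wass (hconn.isProbMass_mMeas h0 h1 x) hPy fun A hA => ?_
  have := sum_mul_sub_sum_mul_le_transportCost hA hlip
  rw [sum_mMeas_mul_dist α hx] at this
  linarith

lemma kappaAlpha_le (hconn : G.Connected) {α : ℝ} (h0 : 0 ≤ α) (h1 : α ≤ 1) {x y : V}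
    (hxy : x ≠ y) : kappaAlpha G α x y ≤ 2 * (1 - α) := by
  have hd : (1 : ℝ) ≤ G.dist x y := by exact_mod_cast hconn.pos_dist_of_ne hxy
  have hW := dist_sub_le_wass_mMeas hconn h0 h1 x y
  rw [kappaAlpha, sub_le_comm, le_div_iff₀ (by linarith)]
  nlinarith

lemma wass_mMeas_le_mix (hconn : G.Connected) {α β : ℝ} (h0 : 0 ≤ α) (hαβ : α ≤ β)
    (hβ : β < 1) (x y : V) :
    Wass G (mMeas G β x) (mMeas G β y)
      ≤ (1 - β) / (1 - α) * Wass G (mMeas G α x) (mMeas G α y)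
        + (1 - (1 - β) / (1 - α)) * G.dist x y := by
  have hα : 0 < 1 - α := by linarith
  have hl0 : 0 ≤ (1 - β) / (1 - α) := div_nonneg (by linarith) hα.le
  have hl1 : (1 - β) / (1 - α) ≤ 1 := div_le_one_of_le₀ (by linarith) hα.le
  rw [mMeas_eq_mix (hαβ.trans_lt hβ).ne β x, mMeas_eq_mix (hαβ.trans_lt hβ).ne β y,
    ← transportCost_prod_single (G := G) x y]
  exact wass_mix_le (hconn.isProbMass_mMeas h0 (by linarith) x)
    (hconn.isProbMass_mMeas h0 (by linarith) y) (.prod (isProbMass_single x) (isProbMass_single y))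
    hl0 hl1

lemma mul_kappaAlpha_le_kappaAlpha (hconn : G.Connected) {α β : ℝ} (h0 : 0 ≤ α)
    (hαβ : α ≤ β) (hβ : β < 1) {x y : V} (hxy : x ≠ y) :
    (1 - β) / (1 - α) * kappaAlpha G α x y ≤ kappaAlpha G β x y := by
  have hd : (0 : ℝ) < G.dist x y := by exact_mod_cast hconn.pos_dist_of_ne hxy
  have hW := wass_mMeas_le_mix hconn h0 hαβ hβ x y
  set l := (1 - β) / (1 - α)
  have : Wass G (mMeas G β x) (mMeas G β y) / G.dist x y
      ≤ l * (Wass G (mMeas G α x) (mMeas G α y) / G.dist x y) + (1 - l) := by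
    rw [div_le_iff₀ hd]
    exact hW.trans_eq (by field_simp)
  simp only [kappaAlpha]
  linarith

lemma monotoneOn_kappaAlpha_div (hconn : G.Connected) {x y : V} (hxy : x ≠ y) :
    MonotoneOn (fun α => kappaAlpha G α x y / (1 - α)) (Set.Ico 0 1) := by
  rintro α ⟨h0, hα⟩ β ⟨-, hβ⟩ hαβ
  have hα' : 1 - α ≠ 0 := by linarith
  calc kappaAlpha G α x y / (1 - α)
      = (1 - β) / (1 - α) * kappaAlpha G α x y / (1 - β) := by
        field_simp [show 1 - β ≠ 0 by linarith]
    _ ≤ kappaAlpha G β x y / (1 - β) :=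
        div_le_div_of_nonneg_right (mul_kappaAlpha_le_kappaAlpha hconn h0 hαβ hβ hxy)
          (by linarith)

lemma tendsto_kappaAlpha_div (hconn : G.Connected) {x y : V} (hxy : x ≠ y) :
    Tendsto (fun α => kappaAlpha G α x y / (1 - α)) (𝓝[<] 1) (𝓝 (kappa G x y)) := by
  have hbdd : BddAbove ((fun α => kappaAlpha G α x y / (1 - α)) '' Set.Ioo 0 1) := by
    refine ⟨2, ?_⟩
    rintro _ ⟨α, ⟨h0, h1⟩, rfl⟩
    rw [div_le_iff₀ (by linarith)]
    exact kappaAlpha_le hconn h0.le h1.le hxy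
  have h := ((monotoneOn_kappaAlpha_div hconn hxy).mono Set.Ioo_subset_Ico_self
    ).tendsto_nhdsWithin_Ioo_left (Set.nonempty_Ioo.mpr zero_lt_one) hbdd
  rwa [kappa, h.limUnder_eq]

lemma dist_mul_kappaAlpha_add_le (hconn : G.Connected) {α : ℝ} (h0 : 0 ≤ α) (h1 : α ≤ 1)
    {x y z : V} (hxz : x ≠ z) (hzy : z ≠ y) (hgeo : G.dist x z + G.dist z y = G.dist x y) :
    G.dist x z * kappaAlpha G α x z + G.dist z y * kappaAlpha G α z y
      ≤ G.dist x y * kappaAlpha G α x y := by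
  have hxy := hconn.ne_of_dist_add_dist_eq hxz hgeo
  have hgeo' : (G.dist x z : ℝ) + G.dist z y = G.dist x y := by exact_mod_cast hgeo
  rw [dist_mul_kappaAlpha hconn α hxz, dist_mul_kappaAlpha hconn α hzy,
    dist_mul_kappaAlpha hconn α hxy]
  have := wass_triangle hconn (hconn.isProbMass_mMeas h0 h1 x) (hconn.isProbMass_mMeas h0 h1 z)
    (hconn.isProbMass_mMeas h0 h1 y)
  linarith

lemma dist_mul_kappa_add_le (hconn : G.Connected) {x y z : V} (hxz : x ≠ z) (hzy : z ≠ y)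
    (hgeo : G.dist x z + G.dist z y = G.dist x y) :
    G.dist x z * kappa G x z + G.dist z y * kappa G z y ≤ G.dist x y * kappa G x y := by
  have hxy := hconn.ne_of_dist_add_dist_eq hxz hgeo
  refine le_of_tendsto_of_tendsto
    (((tendsto_kappaAlpha_div hconn hxz).const_mul _).add
      ((tendsto_kappaAlpha_div hconn hzy).const_mul _))
    ((tendsto_kappaAlpha_div hconn hxy).const_mul _) ?_
  filter_upwards [Ioo_mem_nhdsLT zero_lt_one] with α ⟨h0, h1⟩
  simp only [← mul_div_assoc, ← add_div]
  exact div_le_div_of_nonneg_right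
    (dist_mul_kappaAlpha_add_le hconn h0.le h1.le hxz hzy hgeo) (by linarith)

end Curvature

theorem stmt11 {V : Type*} [Fintype V] [DecidableEq V]
    (G : SimpleGraph V) [DecidableRel G.Adj]
    (hconn : G.Connected) (hcard : 1 < Fintype.card V)
    (κ₀ : ℝ) (h : ∀ x y : V, G.Adj x y → κ₀ ≤ kappa G x y) :
    ∀ x y : V, x ≠ y → κ₀ ≤ kappa G x y := by
  have : Nontrivial V := Fintype.one_lt_card_iff_nontrivial.mp hcard
  suffices ∀ n : ℕ, ∀ x y : V, G.dist x y = n + 1 → κ₀ ≤ kappa G x y from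
    fun x y hxy => this _ x y (Nat.succ_pred_eq_of_pos (hconn.pos_dist_of_ne hxy)).symm
  intro n
  induction n with
  | zero => exact fun x y hd => h x y (dist_eq_one_iff_adj.mp hd)
  | succ n ih =>
    intro x y hd
    obtain ⟨z, hxz, hzy⟩ := hconn.exists_adj_dist_add_one_eq (x := x) (y := y)
      (by rintro rfl; simp at hd)
    have hxz1 : G.dist x z = 1 := dist_eq_one_iff_adj.mpr hxz
    have hzy_ne : z ≠ y := by
      rintro rfl
      rw [dist_self] at hzy
      omega
    have hgeo := dist_mul_kappa_add_le hconn hxz.ne hzy_ne (by omega)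
    rw [hxz1, hd, show G.dist z y = n + 1 by omega] at hgeo
    push_cast at hgeo
    nlinarith [h x z hxz, ih z y (by omega)]
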